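/- arXiv:1407.1383 — 2 statements merged into one kernel-verified Lean document; each statement's English description precedes it below -/
import Mathlib

section
/- Let Z have cdf F(z) = 1 − (1+K)/(zρ + K + 1) · exp(−K + K(1+K)/(ρ z + K + 1)) for z ≥ 0, where ρ = γ̄_sp/γ̄_s > 0 and K ≥ 0. Then lim_{z→∞} z f(z)/(1 − F(z)) = 1, where f = F′. -/
/-!
For `z ≥ 0` the tail is `1 - F = G := (1+K)/u · exp(-K + K(1+K)/u)` with `u = ρz + K + 1`.
Its logarithmic derivative is `-(ρ/u)(1 + K(1+K)/u)`, so `z f(z)/(1 - F(z)) = (ρz/u)(1 + K(1+K)/u)`,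
and both factors tend to `1` because `u` grows linearly in `z`.
-/

open Real Filter

lemma tendsto_const_div_affine_atTop {ρ : ℝ} (hρ : 0 < ρ) (b d : ℝ) :
    Tendsto (fun z => b / (ρ * z + d)) atTop (nhds 0) :=
  (tendsto_atTop_add_const_right _ d (tendsto_id.const_mul_atTop hρ)).const_div_atTop b

lemma tendsto_mul_div_affine_atTop {ρ : ℝ} (hρ : 0 < ρ) (d : ℝ) :
    Tendsto (fun z => z * (ρ / (ρ * z + d))) atTop (nhds 1) := by
  have hlim : Tendsto (fun z => 1 - d / (ρ * z + d)) atTop (nhds (1 - 0)) :=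
    tendsto_const_nhds.sub (tendsto_const_div_affine_atTop hρ d d)
  rw [sub_zero] at hlim
  refine hlim.congr' ?_
  filter_upwards [eventually_gt_atTop (-d / ρ)] with z hz
  have hu : ρ * z + d ≠ 0 := by
    have := (div_lt_iff₀ hρ).1 hz
    linarith
  field_simp
  ring

lemma hasDerivAt_div_mul_exp_add_div {u : ℝ → ℝ} {u' z : ℝ} (c a b : ℝ)
    (hu : HasDerivAt u u' z) (hz : u z ≠ 0) :
    HasDerivAt (fun x => c / u x * exp (a + b / u x))
      (-(u' / u z) * (1 + b / u z) * (c / u z * exp (a + b / u z))) z := by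
  have hdiv (k : ℝ) : HasDerivAt (fun x => k / u x) (-(k * u') / u z ^ 2) z := by
    simpa using (hasDerivAt_const z k).fun_div hu hz
  refine ((hdiv c).fun_mul ((hdiv b).const_add a).exp).congr_deriv ?_
  field_simp
  ring

/-- Let `Z` have cdf `F(z) = 1 - (1+K)/(zρ+K+1) · exp(-K + K(1+K)/(ρz+K+1))` for `z ≥ 0`,
where `ρ > 0` and `K ≥ 0`. Then `z f(z)/(1 - F(z)) → 1` as `z → ∞`, where `f = F'`. -/
theorem stmt_8 (K ρ : ℝ) (hK : 0 ≤ K) (hρ : 0 < ρ)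
    (F : ℝ → ℝ)
    (hF : ∀ z ≥ (0 : ℝ),
      F z = 1 - (1 + K) / (z * ρ + K + 1) * Real.exp (-K + K * (1 + K) / (ρ * z + K + 1))) :
    Tendsto (fun z => z * deriv F z / (1 - F z)) atTop (nhds 1) := by
  set u : ℝ → ℝ := fun z => ρ * z + K + 1
  set G : ℝ → ℝ := fun z => (1 + K) / u z * exp (-K + K * (1 + K) / u z)
  have hFG : ∀ z ≥ (0 : ℝ), F z = 1 - G z := fun z hz => by
    simp only [hF z hz, G, u, mul_comm z ρ]
  have hlim := (tendsto_mul_div_affine_atTop hρ (K + 1)).mul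
    ((tendsto_const_div_affine_atTop hρ (K * (1 + K)) (K + 1)).const_add 1)
  rw [add_zero, mul_one] at hlim
  refine hlim.congr' ?_
  filter_upwards [eventually_gt_atTop 0] with z hz
  have hu : u z ≠ 0 := by positivity
  have hG : G z ≠ 0 := by positivity
  have hderiv : HasDerivAt F (-(-(ρ / u z) * (1 + K * (1 + K) / u z) * G z)) z := by
    have hu' : HasDerivAt u ρ z := by
      simpa only [mul_one] using (((hasDerivAt_id' z).const_mul ρ).add_const K).add_const 1
    refine ((hasDerivAt_div_mul_exp_add_div _ _ _ hu' hu).const_sub 1).congr_of_eventuallyEq ?_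
    filter_upwards [Ioi_mem_nhds hz] with x hx using hFG x hx.le
  rw [hderiv.deriv, hFG z hz.le, sub_sub_cancel]
  simp only [u]
  field_simp
  ring
end

section
/- Let F(z) = 1 − (1+K)/(zρ + K + 1) · exp(−K + K(1+K)/(ρ z + K + 1)) with ρ = γ̄_sp/γ̄_s. The solution a_N of F(a_N) = 1 − 1/N is a_N = (K² + K)/(ρ · W(K e^K / N)) − (K+1)/ρ, where W is the principal Lambert W function. -/
/-!
Put `u = K(1+K)/(ρ a_N + K + 1)`. Then `(1+K)/(ρ a_N + K + 1) = u/K` and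
`exp(-K + u) = eᵘ/eᴷ`, so `F(a_N) = 1 - 1/N` becomes `u eᵘ = K eᴷ/N`. Since `t ↦ t eᵗ` is
strictly increasing on `[-1, ∞)`, this forces `u = W(K eᴷ/N)`, and solving for `a_N` gives the formula.
-/

open Real

theorem strictMonoOn_mul_exp : StrictMonoOn (fun t : ℝ => t * exp t) (Set.Ici (-1)) := by
  refine strictMonoOn_of_deriv_pos (convex_Ici _) (by fun_prop) fun t ht => ?_
  rw [interior_Ici, Set.mem_Ioi] at ht
  rw [((hasDerivAt_id' t).fun_mul (hasDerivAt_exp t)).deriv, ← add_mul]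
  exact mul_pos (by linarith) (exp_pos t)

theorem eq_apply_of_mul_exp_eq (W : ℝ → ℝ) (hW : ∀ x ≥ (0 : ℝ), W x * exp (W x) = x)
    {x u : ℝ} (hx : 0 < x) (hu : -1 ≤ u) (h : u * exp u = x) : u = W x := by
  have hWx := hW x hx.le
  have hWx_pos : 0 < W x := pos_of_mul_pos_left (hWx ▸ hx) (exp_pos _).le
  exact strictMonoOn_mul_exp.injOn hu (show -1 ≤ W x by linarith) (h.trans hWx.symm)

theorem div_mul_exp_neg_add_eq {K : ℝ} (hK : K ≠ 0) (D : ℝ) :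
    (1 + K) / D * exp (-K + K * (1 + K) / D) =
      K * (1 + K) / D * exp (K * (1 + K) / D) / (K * exp K) := by
  rw [exp_add, exp_neg]
  field_simp

theorem stmt_9_general (K ρ : ℝ) (hK : 0 < K) (hρ : 0 < ρ)
    (W : ℝ → ℝ)
    (hW : ∀ x ≥ (0 : ℝ), W x * Real.exp (W x) = x)
    (N : ℕ) (hN : 1 ≤ N)
    (aN : ℝ)
    (haN : 1 - (1 + K) / (aN * ρ + K + 1) * Real.exp (-K + K * (1 + K) / (ρ * aN + K + 1))
      = 1 - 1 / (N : ℝ)) :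
    aN = (K ^ 2 + K) / (ρ * W (K * Real.exp K / N)) - (K + 1) / ρ := by
  have hN_pos : (0 : ℝ) < N := by exact_mod_cast hN
  set D := ρ * aN + K + 1
  have hF : (1 + K) / D * exp (-K + K * (1 + K) / D) = 1 / N := by
    rw [show aN * ρ + K + 1 = D by ring] at haN
    linarith
  have hD_pos : 0 < D := by
    have h : 0 < (1 + K) / D * exp (-K + K * (1 + K) / D) := hF ▸ by positivity
    exact (div_pos_iff_of_pos_left (by linarith)).mp ((mul_pos_iff_of_pos_right (exp_pos _)).mp h)
  have hu : K * (1 + K) / D * exp (K * (1 + K) / D) = K * exp K / N := by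
    rw [div_mul_exp_neg_add_eq hK.ne', div_eq_iff (by positivity)] at hF
    rw [hF]
    ring
  have hu_pos : 0 < K * (1 + K) / D := by positivity
  have huW := eq_apply_of_mul_exp_eq W hW (by positivity) (by linarith) hu
  rw [← huW]
  field_simp
  linarith

/-- With `F(z) = 1 - (1+K)/(zρ+K+1)·exp(-K + K(1+K)/(ρz+K+1))`, the solution `a_N` of
`F(a_N) = 1 - 1/N` is `a_N = (K²+K)/(ρ W(K e^K/N)) - (K+1)/ρ`, where `W` is the principal
Lambert W function (characterized by `W(x) e^{W(x)} = x` and `W(x) ≥ 0` for `x ≥ 0`). -/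
theorem stmt_9 (K ρ : ℝ) (hK : 0 < K) (hρ : 0 < ρ)
    (W : ℝ → ℝ)
    (hW : ∀ x ≥ (0 : ℝ), W x * Real.exp (W x) = x)
    (hWnonneg : ∀ x ≥ (0 : ℝ), 0 ≤ W x)
    (N : ℕ) (hN : 1 ≤ N)
    (aN : ℝ)
    (haN : 1 - (1 + K) / (aN * ρ + K + 1) * Real.exp (-K + K * (1 + K) / (ρ * aN + K + 1))
      = 1 - 1 / (N : ℝ)) :
    aN = (K ^ 2 + K) / (ρ * W (K * Real.exp K / N)) - (K + 1) / ρ :=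
  stmt_9_general K ρ hK hρ W hW N hN aN haN
end
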